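/- arXiv:2502.14408 — 3 statements merged into one kernel-verified Lean document; each statement's English description precedes it below -/
import Mathlib

section
/- Let A be an integral domain, P ∈ A[Y] monic of degree n ≥ 1, and p a positive divisor of n invertible in A. Let Q ∈ A[Y] be monic of degree n/p, let a₁ be the coefficient of Q^{p−1} in the Q-adic expansion of P, and let a₁' be the coefficient of τ_P(Q)^{p−1} in the τ_P(Q)-adic expansion of P. If a₁ ≠ 0, then deg a₁' ≤ deg a₁ − 1. -/
/-!
Let `m = deg Q`, `d = deg a₁ < m` and `B = a₁ / p`, so that `τ = Q + B`. The `Q`-adic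
expansion gives `P = Q^p + a₁ Q^(p-1) + R` with `deg R < (p-1) m`. By the binomial theorem
`(Q + B)^p = Q^p + p B Q^(p-1) + ∑_{k ≥ 2} (p choose k) B^k Q^(p-k)`, and the terms with
`k ≥ 2` have degree at most `(p-1) m + d - (m - d)`. As `p B = a₁`, this gives
`deg (P - τ^p) < (p-1) m + d`. Now `P = τ · τ^(p-1) + (P - τ^p)` with `τ` monic of degree `m`,
so the coefficient of `τ^(p-1)` is `(P - τ^p) /ₘ τ^(p-1)`, of degree `< d`.
-/

open scoped Classical

/-- The coefficient `a_i` of `Q^(s-i)` in the `Q`-adic expansion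
`P = a₀ Q^s + a₁ Q^(s-1) + ⋯ + a_s` of `P`, where `s = ⌊deg P / deg Q⌋`.  (When `Q` is
monic of positive degree this expansion exists and is unique, so the choice below picks
out the actual expansion.) -/
noncomputable def adicCoeff {A : Type*} [CommRing A] (P Q : Polynomial A) (i : ℕ) :
    Polynomial A :=
  if h : ∃ a : ℕ → Polynomial A, (∀ j, (a j).degree < Q.degree) ∧
      P = ∑ j ∈ Finset.range (P.natDegree / Q.natDegree + 1),
        a j * Q ^ (P.natDegree / Q.natDegree - j)
  then h.choose i else 0

/-- The Tschirnhausen operator `τ_P (Q) = Q + (1/s) a₁`, where `a₁` is the coefficient of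
`Q^(s-1)` in the `Q`-adic expansion of `P` and `s = deg P / deg Q`. -/
noncomputable def tau {A : Type*} [CommRing A] (P Q : Polynomial A) : Polynomial A :=
  Q + Polynomial.C (Ring.inverse ((P.natDegree / Q.natDegree : ℕ) : A)) * adicCoeff P Q 1

open Polynomial Finset

namespace Polynomial

variable {R : Type*} [CommRing R]

theorem degree_divByMonic_lt_of_degree_lt_add {f g : R[X]} (hg : g.Monic) {d : ℕ}
    (h : f.degree < (g.natDegree + d : ℕ)) : (f /ₘ g).degree < d := by
  by_cases hq : f /ₘ g = 0
  · rw [hq, degree_zero]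
    exact WithBot.bot_lt_coe d
  have hf : f ≠ 0 := by
    rintro rfl
    exact hq (zero_divByMonic g)
  have := Nontrivial.of_polynomial_ne hq
  have hgf : g.natDegree ≤ f.natDegree :=
    natDegree_le_natDegree (not_lt.1 ((divByMonic_eq_zero_iff hg).not.1 hq))
  rw [degree_eq_natDegree hf, Nat.cast_lt] at h
  rw [degree_eq_natDegree hq, natDegree_divByMonic f hg, Nat.cast_lt]
  omega

theorem degree_mul_pow_lt {a Q : R[X]} (hQ : Q.Monic) (ha : a.degree < Q.degree) (e : ℕ) :
    (a * Q ^ e).degree < ((e + 1) * Q.natDegree : ℕ) := by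
  rcases eq_or_ne a 0 with rfl | ha0
  · rw [zero_mul, degree_zero]
    exact WithBot.bot_lt_coe _
  have had := natDegree_lt_natDegree ha0 ha
  have hle : (a * Q ^ e).natDegree ≤ a.natDegree + e * Q.natDegree :=
    natDegree_mul_le_of_le le_rfl (hQ.natDegree_pow e).le
  exact degree_le_natDegree.trans_lt (by exact_mod_cast (by nlinarith))

theorem degree_add_pow_sub_lt {Q B : R[X]} {n m d : ℕ} (hQ : Q.natDegree ≤ m)
    (hB : B.natDegree ≤ d) (hdm : d < m) :
    ((Q + B) ^ (n + 1) - Q ^ (n + 1) - ((n + 1 : ℕ) : R[X]) * B * Q ^ n).degree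
      < (n * m + d : ℕ) := by
  have hexp : (Q + B) ^ (n + 1) - Q ^ (n + 1) - ((n + 1 : ℕ) : R[X]) * B * Q ^ n =
      ∑ k ∈ range n, Q ^ k * B ^ (n + 1 - k) * ((n + 1).choose k : R[X]) := by
    rw [add_pow, sum_range_succ, sum_range_succ, Nat.choose_succ_self_right, Nat.choose_self,
      Nat.sub_self, Nat.add_sub_cancel_left]
    ring
  rw [hexp]
  refine (degree_sum_le _ _).trans_lt
    ((Finset.sup_lt_iff (WithBot.bot_lt_coe _)).2 fun k hk => degree_le_natDegree.trans_lt ?_)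
  obtain ⟨j, rfl⟩ : ∃ j, n = k + 1 + j := ⟨n - k - 1, by have := mem_range.1 hk; omega⟩
  have hle : (Q ^ k * B ^ (k + 1 + j + 1 - k) * ((k + 1 + j + 1).choose k : R[X])).natDegree
      ≤ k * m + (j + 2) * d + 0 := by
    refine natDegree_mul_le_of_le (natDegree_mul_le_of_le (natDegree_pow_le_of_le k hQ) ?_)
      (natDegree_natCast _).le
    rw [show k + 1 + j + 1 - k = j + 2 by omega]
    exact natDegree_pow_le_of_le _ hB
  exact_mod_cast hle.trans_lt (by nlinarith)

theorem exists_sum_mul_pow_sub [Nontrivial R] {Q : R[X]} (hQ : Q.Monic) (s : ℕ) {P : R[X]}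
    (hP : P.degree < ((s + 1) * Q.natDegree : ℕ)) :
    ∃ a : ℕ → R[X], (∀ j, (a j).degree < Q.degree) ∧
      P = ∑ j ∈ range (s + 1), a j * Q ^ (s - j) := by
  induction s generalizing P with
  | zero =>
    refine ⟨fun _ => P, fun _ => ?_, by simp⟩
    rwa [degree_eq_natDegree hQ.ne_zero, ← one_mul Q.natDegree]
  | succ s ih =>
    obtain ⟨b, hb, hPb⟩ := ih (P := P /ₘ Q)
      (degree_divByMonic_lt_of_degree_lt_add hQ (by rwa [add_comm, ← Nat.succ_mul]))
    refine ⟨Function.update b (s + 1) (P %ₘ Q), fun j => ?_, ?_⟩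
    · rcases eq_or_ne j (s + 1) with rfl | hj
      · simpa using degree_modByMonic_lt P hQ
      · simpa [hj] using hb j
    · rw [sum_range_succ, Function.update_self, Nat.sub_self, pow_zero, mul_one]
      conv_lhs => rw [← modByMonic_add_div P Q, hPb, mul_sum]
      rw [add_comm]
      congr 1
      refine sum_congr rfl fun j hj => ?_
      have hj := mem_range.1 hj
      rw [Function.update_of_ne (by omega), show s + 1 - j = s - j + 1 by omega, pow_succ]
      ring

theorem eq_modByMonic_divByMonic_of_sum_mul_pow_sub [Nontrivial R] {P Q : R[X]} (hQ : Q.Monic)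
    {a : ℕ → R[X]} (ha : ∀ j, (a j).degree < Q.degree) {s : ℕ}
    (hP : P = ∑ j ∈ range (s + 1), a j * Q ^ (s - j)) {i : ℕ} (hi : i ≤ s) :
    a i = (P /ₘ Q ^ (s - i)) %ₘ Q := by
  obtain ⟨r, rfl⟩ := Nat.exists_eq_add_of_le hi
  set T := ∑ k ∈ range r, a (i + 1 + k) * Q ^ (r - 1 - k)
  have hsplit : P = T + Q ^ r * ∑ j ∈ range (i + 1), a j * Q ^ (i - j) := by
    rw [hP, show i + r + 1 = (i + 1) + r by omega, sum_range_add, add_comm, mul_sum]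
    congr 1
    · refine sum_congr rfl fun k hk => ?_
      rw [show i + r - (i + 1 + k) = r - 1 - k by omega]
    · refine sum_congr rfl fun j hj => ?_
      rw [mul_left_comm, ← pow_add, show r + (i - j) = i + r - j by have := mem_range.1 hj; omega]
  have hT : T.degree < (Q ^ r).degree := by
    rw [degree_eq_natDegree (hQ.pow r).ne_zero, hQ.natDegree_pow]
    refine (degree_sum_le _ _).trans_lt
      ((Finset.sup_lt_iff (WithBot.bot_lt_coe _)).2 fun k hk => ?_)
    refine (degree_mul_pow_lt hQ (ha _) _).trans_le ?_
    exact_mod_cast Nat.mul_le_mul_right _ (by have := mem_range.1 hk; omega)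
  have hdiv : P /ₘ Q ^ r = ∑ j ∈ range (i + 1), a j * Q ^ (i - j) :=
    (div_modByMonic_unique _ T (hQ.pow r) ⟨hsplit.symm, hT⟩).1
  have hdvd : Q ∣ ∑ j ∈ range i, a j * Q ^ (i - j) :=
    dvd_sum fun j hj => dvd_mul_of_dvd_right (dvd_pow_self Q (by have := mem_range.1 hj; omega)) _
  rw [Nat.add_sub_cancel_left, hdiv, sum_range_succ, Nat.sub_self, pow_zero, mul_one,
    add_modByMonic, (modByMonic_eq_zero_iff_dvd hQ).2 hdvd, zero_add,
    (modByMonic_eq_self_iff hQ).2 (ha i)]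

end Polynomial

open Polynomial

theorem degree_adicCoeff_lt {R : Type*} [CommRing R] {P Q : R[X]} (hQ : Q ≠ 0) (i : ℕ) :
    (adicCoeff P Q i).degree < Q.degree := by
  unfold adicCoeff
  split_ifs with h
  · exact h.choose_spec.1 i
  · rw [degree_zero]
    exact bot_lt_iff_ne_bot.2 (degree_ne_bot.2 hQ)

theorem adicCoeff_eq_modByMonic_divByMonic {R : Type*} [CommRing R] [Nontrivial R]
    {P Q : R[X]} (hQ : Q.Monic) (hQ0 : 0 < Q.natDegree) {i : ℕ}
    (hi : i ≤ P.natDegree / Q.natDegree) :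
    adicCoeff P Q i = (P /ₘ Q ^ (P.natDegree / Q.natDegree - i)) %ₘ Q := by
  have hex := exists_sum_mul_pow_sub hQ (P.natDegree / Q.natDegree) (P := P)
    (degree_le_natDegree.trans_lt (by
      rw [Nat.cast_lt, Nat.succ_mul]; exact Nat.lt_div_mul_add hQ0))
  rw [adicCoeff, dif_pos hex]
  exact eq_modByMonic_divByMonic_of_sum_mul_pow_sub hQ hex.choose_spec.1 hex.choose_spec.2 hi

theorem natDegree_adicCoeff_lt {R : Type*} [CommRing R] {P Q : R[X]} (hQ0 : 0 < Q.natDegree)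
    (i : ℕ) : (adicCoeff P Q i).natDegree < Q.natDegree := by
  by_cases h : adicCoeff P Q i = 0
  · rwa [h, natDegree_zero]
  · exact natDegree_lt_natDegree h (degree_adicCoeff_lt (ne_zero_of_natDegree_gt hQ0) i)

theorem divByMonic_pow_eq_add_adicCoeff_one {R : Type*} [CommRing R] [Nontrivial R]
    {P Q : R[X]} (hP : P.Monic) (hQ : Q.Monic) (hQ0 : 0 < Q.natDegree) {n : ℕ}
    (hPQ : P.natDegree = (n + 1) * Q.natDegree) :
    P /ₘ Q ^ n = Q + adicCoeff P Q 1 := by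
  set D := P /ₘ Q ^ n
  have hQnP : (Q ^ n).degree ≤ P.degree := by
    rw [degree_eq_natDegree (hQ.pow n).ne_zero, degree_eq_natDegree hP.ne_zero, hQ.natDegree_pow,
      hPQ, Nat.cast_le]
    exact Nat.mul_le_mul_right _ n.le_succ
  have hD : D.Monic := (leadingCoeff_divByMonic_of_monic (hQ.pow n) hQnP).trans hP.leadingCoeff
  have hDQ : D.degree = Q.degree := by
    rw [degree_eq_natDegree hD.ne_zero, degree_eq_natDegree hQ.ne_zero,
      natDegree_divByMonic _ (hQ.pow n), hQ.natDegree_pow, hPQ, Nat.succ_mul,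
      Nat.add_sub_cancel_left]
  have hlt : (D - Q).degree < Q.degree :=
    hDQ ▸ degree_sub_lt_left hDQ hD.ne_zero (by rw [hD.leadingCoeff, hQ.leadingCoeff])
  rw [adicCoeff_eq_modByMonic_divByMonic hQ hQ0 (by rw [hPQ, Nat.mul_div_cancel _ hQ0]; omega),
    hPQ, Nat.mul_div_cancel _ hQ0, Nat.add_sub_cancel,
    (div_modByMonic_unique 1 (D - Q) hQ ⟨by ring, hlt⟩).2]
  ring

theorem adicCoeff_one_eq_sub_pow_divByMonic {R : Type*} [CommRing R] [Nontrivial R]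
    {P Q : R[X]} (hP : P.Monic) (hQ : Q.Monic) (hQ0 : 0 < Q.natDegree) {n : ℕ}
    (hPQ : P.natDegree = (n + 1) * Q.natDegree) :
    adicCoeff P Q 1 = (P - Q ^ (n + 1)) /ₘ Q ^ n := by
  rw [(div_modByMonic_unique (P /ₘ Q ^ n - Q) _ (hQ.pow n)
      ⟨by linear_combination modByMonic_add_div P (Q ^ n),
        degree_modByMonic_lt _ (hQ.pow n)⟩).1,
    divByMonic_pow_eq_add_adicCoeff_one hP hQ hQ0 hPQ, add_sub_cancel_left]

theorem degree_sub_add_pow_lt {R : Type*} [CommRing R] [Nontrivial R]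
    {P Q B : R[X]} (hP : P.Monic) (hQ : Q.Monic) (hQ0 : 0 < Q.natDegree) {n : ℕ}
    (hPQ : P.natDegree = (n + 1) * Q.natDegree)
    (hB : ((n + 1 : ℕ) : R[X]) * B = adicCoeff P Q 1)
    (hBd : B.natDegree ≤ (adicCoeff P Q 1).natDegree) :
    (P - (Q + B) ^ (n + 1)).degree < (n * Q.natDegree + (adicCoeff P Q 1).natDegree : ℕ) := by
  have hPQ' := modByMonic_add_div (P - Q ^ (n + 1)) (Q ^ n)
  rw [← adicCoeff_one_eq_sub_pow_divByMonic hP hQ hQ0 hPQ] at hPQ'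
  have hsplit : P - (Q + B) ^ (n + 1) = (P - Q ^ (n + 1)) %ₘ Q ^ n -
      ((Q + B) ^ (n + 1) - Q ^ (n + 1) - ((n + 1 : ℕ) : R[X]) * B * Q ^ n) := by
    linear_combination (-1 : R[X]) * hPQ' - Q ^ n * hB
  have hR : ((P - Q ^ (n + 1)) %ₘ Q ^ n).degree
      < (n * Q.natDegree + (adicCoeff P Q 1).natDegree : ℕ) := by
    refine (degree_modByMonic_lt _ (hQ.pow n)).trans_le ?_
    rw [degree_eq_natDegree (hQ.pow n).ne_zero, hQ.natDegree_pow]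
    exact_mod_cast Nat.le_add_right _ _
  rw [hsplit]
  exact (degree_sub_le _ _).trans_lt
    (max_lt hR (degree_add_pow_sub_lt le_rfl hBd (natDegree_adicCoeff_lt hQ0 1)))

/-- **The Tschirnhausen operator strictly decreases the degree of `a₁`.**
Let `P` be monic of degree `n ≥ 1`, `p` a positive divisor of `n` invertible in `A`, and
`Q` monic of degree `n / p`.  Let `a₁` be the coefficient of `Q^(p-1)` in the `Q`-adic
expansion of `P`, and `a₁'` the coefficient of `τ_P(Q)^(p-1)` in the `τ_P(Q)`-adic
expansion of `P`.  If `a₁ ≠ 0` then `deg a₁' ≤ deg a₁ - 1` (with `deg 0 = -∞`, this is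
`deg a₁' < deg a₁`). -/
theorem stmt_6 {A : Type*} [CommRing A] [IsDomain A] (P : Polynomial A) (n p : ℕ)
    (hP : P.Monic) (hdeg : P.natDegree = n) (hn : 1 ≤ n) (hp : 0 < p) (hdvd : p ∣ n)
    (hinv : IsUnit (p : A)) (Q : Polynomial A) (hQ : Q.Monic) (hQdeg : Q.natDegree = n / p)
    (ha1 : adicCoeff P Q 1 ≠ 0) :
    (adicCoeff P (tau P Q) 1).degree < (adicCoeff P Q 1).degree := by
  obtain ⟨k, rfl⟩ : ∃ k, p = k + 1 := ⟨p - 1, by omega⟩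
  have hQ0 : 0 < Q.natDegree := hQdeg ▸ Nat.div_pos (Nat.le_of_dvd hn hdvd) hp
  have hPdeg : P.natDegree = (k + 1) * Q.natDegree := by
    rw [hdeg, hQdeg, Nat.mul_div_cancel' hdvd]
  set B := C (Ring.inverse ((k + 1 : ℕ) : A)) * adicCoeff P Q 1
  have hτ : tau P Q = Q + B := by rw [tau, hPdeg, Nat.mul_div_cancel _ hQ0]
  have hB : ((k + 1 : ℕ) : A[X]) * B = adicCoeff P Q 1 := by
    rw [← C_eq_natCast, ← mul_assoc, ← C_mul, Ring.mul_inverse_cancel _ hinv, C_1, one_mul]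
  have hBd : B.natDegree ≤ (adicCoeff P Q 1).natDegree := natDegree_C_mul_le _ _
  have hBQ : B.degree < Q.degree := degree_lt_degree (hBd.trans_lt (natDegree_adicCoeff_lt hQ0 1))
  have hτmonic : (Q + B).Monic := hQ.add_of_left hBQ
  have hτdeg : (Q + B).natDegree = Q.natDegree := natDegree_add_eq_left_of_degree_lt hBQ
  rw [hτ, adicCoeff_one_eq_sub_pow_divByMonic hP hτmonic (hτdeg ▸ hQ0) (hτdeg ▸ hPdeg),
    degree_eq_natDegree ha1]
  refine degree_divByMonic_lt_of_degree_lt_add (hτmonic.pow k) ?_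
  rw [hτmonic.natDegree_pow, hτdeg]
  exact degree_sub_add_pow_lt hP hQ hQ0 hPdeg hB hBd
end

section
/- With notation as in the setup, let 0 ≤ k ≤ G−1 and let q be a k-semiroot of f, with primitive Newton–Puiseux parameterization X = U^{N/E_k}, Y = w(U) ∈ ℂ[[U]]. Then the coincidence order of f and q equals B_{k+1}/N; that is, max{ ord_S( y(ωS^{N/E_k}) − w(ω′S^N) ) : ω^N = 1, ω′^{N/E_k} = 1 } = (N/E_k)·B_{k+1}. Equivalently, f and q have equal sets of k-truncated Newton–Puiseux series: the terms of exponent strictly less than B_{k+1}/N in their Newton–Puiseux series coincide. -/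
noncomputable section

/-- The substitution `X ↦ T ^ n` on formal power series, described coefficientwise:
the coefficient of `T ^ j` in `substPow n σ` is the coefficient of `X ^ (j / n)` in `σ`
when `n ∣ j`, and `0` otherwise. -/
def substPow (n : ℕ) (σ : PowerSeries ℂ) : PowerSeries ℂ :=
  PowerSeries.mk fun j => if n ∣ j then PowerSeries.coeff (j / n) σ else 0

/-- The power series `φ (T ^ n, w (T))`, for `φ ∈ ℂ[[X]][Y]` and `w ∈ ℂ[[T]]`. -/
def evalCurve (n : ℕ) (w : PowerSeries ℂ) (φ : Polynomial (PowerSeries ℂ)) :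
    PowerSeries ℂ :=
  ∑ i ∈ Finset.range (φ.natDegree + 1), substPow n (φ.coeff i) * w ^ i

/-- `X = T ^ n`, `Y = w (T)` is a primitive Newton–Puiseux parameterization of the curve
defined by `q ∈ ℂ[[X]][Y]`: one has `q (T ^ n, w (T)) = 0`, `w` has zero constant term, and
`gcd ({n} ∪ {j : coeff j w ≠ 0}) = 1`. -/
def IsNPParam (q : Polynomial (PowerSeries ℂ)) (n : ℕ) (w : PowerSeries ℂ) : Prop :=
  evalCurve n w q = 0 ∧ PowerSeries.constantCoeff w = 0 ∧
    ∀ d : ℕ, d ∣ n → (∀ j, PowerSeries.coeff j w ≠ 0 → d ∣ j) → d = 1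

/-- `B 0, B 1, …, B G` is the characteristic sequence of the primitive Newton–Puiseux
parameterization `X = T ^ n`, `Y = w (T)`:  `B 0 = n`; for `1 ≤ i ≤ G`, `B i` is the least
exponent `j` of a nonzero term of `w` such that `gcd (B 0, …, B (i-1)) ∤ j`; and `G` is the
least index for which `gcd (B 0, …, B G) = 1`. -/
def IsCharSeq (n : ℕ) (w : PowerSeries ℂ) (G : ℕ) (B : ℕ → ℕ) : Prop :=
  B 0 = n ∧
    (∀ i, 1 ≤ i → i ≤ G →
      B i = sInf {j : ℕ | PowerSeries.coeff j w ≠ 0 ∧ ¬ (Finset.range i).gcd B ∣ j}) ∧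
    (Finset.range (G + 1)).gcd B = 1 ∧ ∀ i < G, (Finset.range (i + 1)).gcd B ≠ 1

/-- `Ebar B i = gcd (B 0, …, B i)`, the sequence of greatest common divisors. -/
def Ebar (B : ℕ → ℕ) (i : ℕ) : ℕ := (Finset.range (i + 1)).gcd B

/-- The generators of the semigroup:
`B̄ 0 = B 0` and `B̄ i = B i + Σ_{k=1}^{i-1} ((E (k-1) - E k) / E (i-1)) * B k` for `i ≥ 1`. -/
def Bbar (B : ℕ → ℕ) (i : ℕ) : ℕ :=
  if i = 0 then B 0
  else B i + ∑ k ∈ Finset.Ico 1 i, ((Ebar B (k - 1) - Ebar B k) / Ebar B (i - 1)) * B k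

/-- `B̄ i` as an extended natural number, with the convention `B̄ (G + 1) = ∞`. -/
def BbarTop (G : ℕ) (B : ℕ → ℕ) (i : ℕ) : ℕ∞ :=
  if i ≤ G then (Bbar B i : ℕ∞) else ⊤

/-- `q` is a `k`-semiroot of the branch parameterized by `X = T ^ N`, `Y = y (T)` with
characteristic sequence `B 0, …, B G`:  `q` is monic of `Y`-degree `N / E k` and the
intersection number `(f, q)`, i.e. the `T`-adic order of `q (T ^ N, y (T))`, equals
`B̄ (k+1)` (which is `∞` for `k = G`). -/
def IsSemiroot (N : ℕ) (y : PowerSeries ℂ) (G : ℕ) (B : ℕ → ℕ) (k : ℕ)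
    (q : Polynomial (PowerSeries ℂ)) : Prop :=
  q.Monic ∧ q.natDegree = N / Ebar B k ∧ (evalCurve N y q).order = BbarTop G B (k + 1)

/-! Substituting `X = U ^ m` with `m = N / E_k` splits the semiroot as `∏_η (Y - w (η U))` over the
`m`-th roots of unity (the `w (η U)` are distinct since the parameterization is primitive), so
`B̄_{k+1} = (f, q)` is the sum of the orders of `y (T) - w (η T ^ E_k)`. Each of these orders is at
most `B_{k+1}`, the first exponent of `y` not divisible by `E_k`. Fix `η₀` of maximal order and
sort the other `η` into layers by the first `i` with `η ^ (E_i / E_k) ≠ η₀ ^ (E_i / E_k)`: for such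
`η` the coefficients of `T ^ B_i` in the two differences cannot both vanish, so its order is at
most `B_i`. The `i`-th layer has `(E_{i-1} - E_i) / E_k` elements, so all `η ≠ η₀` together
account for at most `B̄_{k+1} - B_{k+1}`, which forces the order at `η₀` to be `B_{k+1}`. Finally
`T = S ^ m` multiplies orders by `m`. -/

open PowerSeries Finset

lemma substPow_eq_expand {n : ℕ} (hn : n ≠ 0) (σ : ℂ⟦X⟧) :
    substPow n σ = expand n hn σ := by
  ext j
  simp [substPow, coeff_expand]

lemma evalCurve_eq_eval_map {n : ℕ} (hn : n ≠ 0) (w : ℂ⟦X⟧)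
    (φ : Polynomial ℂ⟦X⟧) :
    evalCurve n w φ = (φ.map (expand (R := ℂ) n hn).toRingHom).eval w := by
  simp [evalCurve, Polynomial.eval_map, Polynomial.eval₂_eq_sum_range, substPow_eq_expand hn]

lemma rescale_expand_of_pow_eq_one {R : Type*} [CommRing R] {n : ℕ} (hn : n ≠ 0) {η : R}
    (hη : η ^ n = 1) (σ : R⟦X⟧) : rescale η (expand n hn σ) = expand n hn σ := by
  ext j
  rw [coeff_rescale, coeff_expand]
  split_ifs with h
  · obtain ⟨t, rfl⟩ := h
    rw [pow_mul, hη, one_pow, one_mul]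
  · rw [mul_zero]

lemma rescale_injOn_nthRootsFinset {R : Type*} [Field R] {n : ℕ}
    {w : R⟦X⟧} (hprim : ∀ d : ℕ, d ∣ n → (∀ j, coeff j w ≠ 0 → d ∣ j) → d = 1) :
    Set.InjOn (fun η => rescale η w) (Polynomial.nthRootsFinset n (1 : R)) := by
  intro η hη η' hη' heq
  have hn : 0 < n := Nat.pos_of_ne_zero fun h => by simp [h] at hη
  rw [mem_coe, Polynomial.mem_nthRootsFinset hn] at hη hη'
  have hη'0 : η' ≠ 0 := by rintro rfl; simp [hn.ne'] at hη'
  have horder : orderOf (η * η'⁻¹) = 1 := by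
    refine hprim _ (orderOf_dvd_of_pow_eq_one ?_) fun j hj => orderOf_dvd_of_pow_eq_one ?_
    · rw [mul_pow, inv_pow, hη, hη', inv_one, mul_one]
    · have hc := congrArg (coeff j) heq
      simp only [coeff_rescale] at hc
      rw [mul_pow, inv_pow, mul_right_cancel₀ hj hc, mul_inv_cancel₀ (pow_ne_zero _ hη'0)]
  exact (mul_inv_eq_one₀ hη'0).mp (orderOf_eq_one_iff.mp horder)

lemma Polynomial.eq_prod_X_sub_C_of_monic_of_natDegree_le {R : Type*} [CommRing R] [IsDomain R]
    {p : Polynomial R} (hp : p.Monic) {s : Finset R} (hroot : ∀ a ∈ s, p.IsRoot a)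
    (hdeg : p.natDegree ≤ #s) : p = ∏ a ∈ s, (X - C a) := by
  have hle : s.val ≤ p.roots :=
    (Multiset.le_iff_subset s.nodup).mpr fun a ha => (mem_roots hp.ne_zero).mpr (hroot a ha)
  have hroots : s.val = p.roots :=
    Multiset.eq_of_le_of_card_le hle ((card_roots' p).trans hdeg)
  conv_lhs => rw [← prod_multiset_X_sub_C_of_monic_of_roots_card_eq hp
    (le_antisymm (card_roots' p) (hroots ▸ hdeg))]
  rw [← hroots]
  rfl

lemma map_expand_eq_prod {q : Polynomial ℂ⟦X⟧} (hmonic : q.Monic) {m : ℕ}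
    (hm : m ≠ 0) (hdeg : q.natDegree = m) {w : ℂ⟦X⟧} (hw : IsNPParam q m w) :
    q.map (expand (R := ℂ) m hm).toRingHom
      = ∏ η ∈ Polynomial.nthRootsFinset m (1 : ℂ), (Polynomial.X - Polynomial.C (rescale η w)) := by
  classical
  obtain ⟨hroot, -, hprim⟩ := hw
  rw [evalCurve_eq_eval_map hm] at hroot
  have hcard : #(Polynomial.nthRootsFinset m (1 : ℂ)) = m :=
    (Complex.isPrimitiveRoot_exp m hm).card_nthRootsFinset
  rw [← Finset.prod_image (f := fun σ => Polynomial.X - Polynomial.C σ)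
    (rescale_injOn_nthRootsFinset hprim)]
  refine Polynomial.eq_prod_X_sub_C_of_monic_of_natDegree_le (hmonic.map _) ?_ ?_
  · simp only [mem_image]
    rintro _ ⟨η, hη, rfl⟩
    have hη1 : η ^ m = 1 := (Polynomial.mem_nthRootsFinset (Nat.pos_of_ne_zero hm) 1).mp hη
    have hcomp : (rescale η).comp (expand (R := ℂ) m hm).toRingHom
        = (expand (R := ℂ) m hm).toRingHom :=
      RingHom.ext (rescale_expand_of_pow_eq_one hm hη1)
    rw [Polynomial.IsRoot, ← hcomp, ← Polynomial.map_map, Polynomial.eval_map,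
      Polynomial.eval₂_at_apply, hroot, map_zero]
  · rw [hmonic.natDegree_map, card_image_of_injOn (rescale_injOn_nthRootsFinset hprim), hcard,
      hdeg]

lemma evalCurve_mul_eq_prod {q : Polynomial ℂ⟦X⟧} (hmonic : q.Monic) {m E : ℕ}
    (hm : m ≠ 0) (hE : E ≠ 0) (hdeg : q.natDegree = m) {w : ℂ⟦X⟧}
    (hw : IsNPParam q m w) (y : ℂ⟦X⟧) :
    evalCurve (E * m) y q
      = ∏ η ∈ Polynomial.nthRootsFinset m (1 : ℂ), (y - expand E hE (rescale η w)) := by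
  have hexp : (expand (R := ℂ) (E * m) (mul_ne_zero hE hm)).toRingHom
      = (expand (R := ℂ) E hE).toRingHom.comp (expand m hm).toRingHom := by
    rw [expand_mul_eq_comp E hE m hm]
    rfl
  rw [evalCurve_eq_eval_map (mul_ne_zero hE hm), hexp, ← Polynomial.map_map,
    map_expand_eq_prod hmonic hm hdeg hw, Polynomial.map_prod, Polynomial.eval_prod]
  simp

lemma substPow_sub_substPow_mul {m E : ℕ} (hm : m ≠ 0) (hE : E ≠ 0) (σ τ : ℂ⟦X⟧) :
    substPow m σ - substPow (m * E) τ = expand m hm (σ - expand E hE τ) := by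
  rw [substPow_eq_expand hm, substPow_eq_expand (mul_ne_zero hm hE), expand_mul, map_sub]

lemma order_sub_expand_le {R : Type*} [CommRing R] {E : ℕ} (hE : E ≠ 0) {y : R⟦X⟧} {b : ℕ}
    (hb : coeff b y ≠ 0) (hEb : ¬ E ∣ b) (σ : R⟦X⟧) : (y - expand E hE σ).order ≤ b :=
  order_le b (by rwa [map_sub, coeff_expand_of_not_dvd E hE σ hEb, sub_zero])

/-- The coefficient of `T ^ (E j)` in `y` equals both `η ^ j w_j` and `η' ^ j w_j`, and it is
nonzero, so `w_j ≠ 0`. -/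
lemma pow_eq_pow_of_lt_order_sub_expand {R : Type*} [CommRing R] [IsDomain R] {E : ℕ}
    (hE : E ≠ 0) {y w : R⟦X⟧} {j : ℕ} (hy : coeff (E * j) y ≠ 0) {η η' : R}
    (hη : ((E * j : ℕ) : ℕ∞) < (y - expand E hE (rescale η w)).order)
    (hη' : ((E * j : ℕ) : ℕ∞) < (y - expand E hE (rescale η' w)).order) : η ^ j = η' ^ j := by
  have hcoeff : ∀ ζ : R, ((E * j : ℕ) : ℕ∞) < (y - expand E hE (rescale ζ w)).order →
      coeff (E * j) y = ζ ^ j * coeff j w := by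
    intro ζ hζ
    have h := coeff_of_lt_order _ hζ
    rwa [map_sub, coeff_expand_mul, coeff_rescale, sub_eq_zero] at h
  have hw : coeff j w ≠ 0 := fun h => hy (by rw [hcoeff η hη, h, mul_zero])
  exact mul_right_cancel₀ hw ((hcoeff η hη).symm.trans (hcoeff η' hη'))

lemma pow_gcd_eq_pow_gcd {G₀ : Type*} [CommGroupWithZero G₀] {a b : G₀} (hb : b ≠ 0) {r s : ℕ}
    (hr : a ^ r = b ^ r) (hs : a ^ s = b ^ s) : a ^ r.gcd s = b ^ r.gcd s := by
  have hpow : ∀ t : ℕ, a ^ t = b ^ t ↔ (a / b) ^ t = 1 := fun t => by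
    rw [div_pow, div_eq_one_iff_eq (pow_ne_zero t hb)]
  rw [hpow] at hr hs ⊢
  exact pow_gcd_eq_one.mpr ⟨hr, hs⟩

lemma card_nthRootsFinset_pow {r : ℕ} (hr : r ≠ 0) {α : ℂ} (hα : α ≠ 0) :
    #(Polynomial.nthRootsFinset r (α ^ r)) = r := by
  classical
  have hζ := Complex.isPrimitiveRoot_exp r hr
  rw [Polynomial.nthRootsFinset_def,
    Multiset.toFinset_card_of_nodup (hζ.nthRoots_nodup (pow_ne_zero r hα)), hζ.card_nthRoots,
    if_pos ⟨α, rfl⟩]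

lemma nthRootsFinset_pow_subset {R : Type*} [CommRing R] [IsDomain R] {r s : ℕ} (hr : r ≠ 0)
    (hs : s ≠ 0) (hrs : r ∣ s) (α : R) :
    Polynomial.nthRootsFinset r (α ^ r) ⊆ Polynomial.nthRootsFinset s (α ^ s) := by
  intro η hη
  rw [Polynomial.mem_nthRootsFinset (Nat.pos_of_ne_zero hr)] at hη
  rw [Polynomial.mem_nthRootsFinset (Nat.pos_of_ne_zero hs)]
  obtain ⟨t, rfl⟩ := hrs
  rw [pow_mul, hη, ← pow_mul]

lemma Finset.sum_le_sum_add_sum_card_sub_mul {α : Type*} [DecidableEq α] (L : ℕ → Finset α)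
    (f : α → ℕ) (c : ℕ → ℕ) {k : ℕ} (hL : ∀ i < k, L (i + 1) ⊆ L i)
    (hf : ∀ i < k, ∀ x ∈ L i \ L (i + 1), f x ≤ c i) :
    ∑ x ∈ L 0, f x ≤ ∑ x ∈ L k, f x + ∑ i ∈ range k, (#(L i) - #(L (i + 1))) * c i := by
  induction k with
  | zero => simp
  | succ k ih =>
    have hsub := hL k (lt_add_one k)
    have hlayer : ∑ x ∈ L k \ L (k + 1), f x ≤ (#(L k) - #(L (k + 1))) * c k := by
      rw [← card_sdiff_of_subset hsub]
      exact sum_le_card_nsmul _ _ _ (hf k (lt_add_one k))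
    have hsplit := sum_sdiff (f := f) hsub
    have := ih (fun i hi => hL i (by omega)) (fun i hi => hf i (by omega))
    rw [sum_range_succ]
    omega

section CharSeq

variable {B : ℕ → ℕ}

lemma Ebar_zero : Ebar B 0 = B 0 := by
  simp [Ebar]

lemma Ebar_succ (i : ℕ) : Ebar B (i + 1) = (Ebar B i).gcd (B (i + 1)) := by
  rw [Ebar, range_add_one, gcd_insert, Nat.gcd_comm]
  rfl

lemma Ebar_dvd_apply {i k : ℕ} (h : i ≤ k) : Ebar B k ∣ B i :=
  gcd_dvd (mem_range.mpr (Nat.lt_succ_of_le h))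

lemma Ebar_dvd_Ebar {i k : ℕ} (h : i ≤ k) : Ebar B k ∣ Ebar B i :=
  gcd_mono (range_subset_range.mpr (Nat.succ_le_succ h))

lemma Ebar_ne_zero (hB : B 0 ≠ 0) (i : ℕ) : Ebar B i ≠ 0 :=
  fun h => hB (Nat.eq_zero_of_zero_dvd (h ▸ (Ebar_dvd_apply (Nat.zero_le i) : Ebar B i ∣ B 0)))

lemma Ebar_div_Ebar_ne_zero (hB : B 0 ≠ 0) {i k : ℕ} (h : i ≤ k) : Ebar B i / Ebar B k ≠ 0 :=
  (Nat.div_pos (Nat.le_of_dvd (Nat.pos_of_ne_zero (Ebar_ne_zero hB i)) (Ebar_dvd_Ebar h))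
    (Nat.pos_of_ne_zero (Ebar_ne_zero hB k))).ne'

lemma Bbar_succ_eq (k : ℕ) : Bbar B (k + 1) = B (k + 1)
    + ∑ i ∈ range k, (Ebar B i / Ebar B k - Ebar B (i + 1) / Ebar B k) * B (i + 1) := by
  rw [Bbar, if_neg k.succ_ne_zero, add_tsub_cancel_right, sum_Ico_eq_sum_range,
    add_tsub_cancel_right]
  congr 1
  refine sum_congr rfl fun i hi => ?_
  rw [mem_range] at hi
  obtain ⟨a, ha⟩ := Ebar_dvd_Ebar (B := B) (Nat.le_of_lt hi)
  obtain ⟨b, hb⟩ := Ebar_dvd_Ebar (B := B) (Nat.succ_le_of_lt hi)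
  rcases (Ebar B k).eq_zero_or_pos with h0 | hpos
  · simp [h0]
  · rw [add_comm 1 i, add_tsub_cancel_right, ha, hb, ← Nat.mul_sub, Nat.mul_div_cancel_left _ hpos,
      Nat.mul_div_cancel_left _ hpos, Nat.mul_div_cancel_left _ hpos]

namespace IsCharSeq

variable {n G : ℕ} {w : ℂ⟦X⟧}

lemma Ebar_dvd (hB : IsCharSeq n w G B) (i : ℕ) : Ebar B i ∣ n :=
  hB.1 ▸ Ebar_dvd_apply (Nat.zero_le i)

lemma coeff_ne_zero_and_not_dvd (hB : IsCharSeq n w G B)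
    (hprim : ∀ d : ℕ, d ∣ n → (∀ j, coeff j w ≠ 0 → d ∣ j) → d = 1) {i : ℕ} (hi : i < G) :
    coeff (B (i + 1)) w ≠ 0 ∧ ¬ Ebar B i ∣ B (i + 1) := by
  have hne : {j | coeff j w ≠ 0 ∧ ¬ Ebar B i ∣ j}.Nonempty := by
    by_contra hempty
    refine hB.2.2.2 i hi (hprim _ (hB.Ebar_dvd i) fun j hj => ?_)
    by_contra hdvd
    exact hempty ⟨j, hj, hdvd⟩
  rw [hB.2.1 (i + 1) (Nat.le_add_left 1 i) hi]
  exact Nat.sInf_mem hne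

end IsCharSeq

end CharSeq

section RootLayer

variable {B : ℕ → ℕ} {k : ℕ}

/-- `η₀` times the `(E_i / E_k)`-th roots of unity, where `E_i = Ebar B i`. As
`E_i = gcd (B 0, …, B i)`, these are the `η` with `η ^ (B l / E_k) = η₀ ^ (B l / E_k)` for all
`l ≤ i`. -/
def rootLayer (B : ℕ → ℕ) (k i : ℕ) (η₀ : ℂ) : Finset ℂ :=
  Polynomial.nthRootsFinset (Ebar B i / Ebar B k) (η₀ ^ (Ebar B i / Ebar B k))

lemma rootLayer_zero {η₀ : ℂ} (hη₀ : η₀ ^ (B 0 / Ebar B k) = 1) :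
    rootLayer B k 0 η₀ = Polynomial.nthRootsFinset (B 0 / Ebar B k) (1 : ℂ) := by
  rw [rootLayer, Ebar_zero, hη₀]

lemma rootLayer_self (hk : Ebar B k ≠ 0) (η₀ : ℂ) : rootLayer B k k η₀ = {η₀} := by
  ext η
  rw [rootLayer, Nat.div_self (Nat.pos_of_ne_zero hk),
    Polynomial.mem_nthRootsFinset Nat.one_pos, pow_one, pow_one, mem_singleton]

lemma card_rootLayer (hB : B 0 ≠ 0) {i : ℕ} (hi : i ≤ k) {η₀ : ℂ} (hη₀ : η₀ ≠ 0) :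
    #(rootLayer B k i η₀) = Ebar B i / Ebar B k :=
  card_nthRootsFinset_pow (Ebar_div_Ebar_ne_zero hB hi) hη₀

lemma rootLayer_subset_of_le (hB : B 0 ≠ 0) {i j : ℕ} (hij : i ≤ j) (hjk : j ≤ k) (η₀ : ℂ) :
    rootLayer B k j η₀ ⊆ rootLayer B k i η₀ :=
  nthRootsFinset_pow_subset (Ebar_div_Ebar_ne_zero hB hjk)
    (Ebar_div_Ebar_ne_zero hB (hij.trans hjk))
    (Nat.div_dvd_div (Ebar_dvd_Ebar hjk) (Ebar_dvd_Ebar hij)) η₀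

lemma pow_ne_pow_of_mem_rootLayer_sdiff (hB : B 0 ≠ 0) {i : ℕ} (hi : i < k) {η₀ η : ℂ}
    (hη₀ : η₀ ≠ 0) (hη : η ∈ rootLayer B k i η₀ \ rootLayer B k (i + 1) η₀) :
    η ^ (B (i + 1) / Ebar B k) ≠ η₀ ^ (B (i + 1) / Ebar B k) := by
  rw [mem_sdiff, rootLayer, rootLayer,
    Polynomial.mem_nthRootsFinset (Nat.pos_of_ne_zero (Ebar_div_Ebar_ne_zero hB hi.le)),
    Polynomial.mem_nthRootsFinset (Nat.pos_of_ne_zero (Ebar_div_Ebar_ne_zero hB hi))] at hη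
  intro h
  apply hη.2
  rw [Ebar_succ i, ← Nat.gcd_div (Ebar_dvd_Ebar hi.le) (Ebar_dvd_apply hi)]
  exact pow_gcd_eq_pow_gcd hη₀ hη.1 h

lemma sum_nthRootsFinset_add_le (hB : B 0 ≠ 0) (hk : Ebar B k ≠ 0) {η₀ : ℂ}
    (hη₀ : η₀ ^ (B 0 / Ebar B k) = 1) (ord : ℂ → ℕ)
    (hlayer : ∀ i < k, ∀ η ∈ rootLayer B k i η₀ \ rootLayer B k (i + 1) η₀, ord η ≤ B (i + 1)) :
    ∑ η ∈ Polynomial.nthRootsFinset (B 0 / Ebar B k) (1 : ℂ), ord η + B (k + 1)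
      ≤ ord η₀ + Bbar B (k + 1) := by
  classical
  have hη₀0 : η₀ ≠ 0 := by
    rintro rfl
    simp [zero_pow, ← Ebar_zero (B := B), Ebar_div_Ebar_ne_zero hB (Nat.zero_le k)] at hη₀
  have hcard : ∑ i ∈ range k, (#(rootLayer B k i η₀) - #(rootLayer B k (i + 1) η₀)) * B (i + 1)
      = ∑ i ∈ range k, (Ebar B i / Ebar B k - Ebar B (i + 1) / Ebar B k) * B (i + 1) :=
    sum_congr rfl fun i hi => by
      rw [card_rootLayer hB (mem_range.mp hi).le hη₀0, card_rootLayer hB (mem_range.mp hi) hη₀0]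
  have h := sum_le_sum_add_sum_card_sub_mul (rootLayer B k · η₀) ord (fun i => B (i + 1))
    (fun i hi => rootLayer_subset_of_le hB (Nat.le_succ i) hi η₀) hlayer
  rw [rootLayer_zero hη₀, rootLayer_self hk, sum_singleton, hcard] at h
  rw [Bbar_succ_eq]
  omega

end RootLayer

section Squeeze

variable {N G : ℕ} {B : ℕ → ℕ} {y w : ℂ⟦X⟧} {k : ℕ}

lemma order_sub_expand_le_of_mem_rootLayer_sdiff (hchar : IsCharSeq N y G B)
    (hprim : ∀ d : ℕ, d ∣ N → (∀ j, coeff j y ≠ 0 → d ∣ j) → d = 1) (hN : N ≠ 0) (hk : k < G)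
    (hE : Ebar B k ≠ 0) {i : ℕ} (hi : i < k) {η₀ η : ℂ} (hη₀ : η₀ ≠ 0)
    (hη : η ∈ rootLayer B k i η₀ \ rootLayer B k (i + 1) η₀)
    (hmax : (y - expand _ hE (rescale η w)).order ≤ (y - expand _ hE (rescale η₀ w)).order) :
    (y - expand _ hE (rescale η w)).order ≤ B (i + 1) := by
  by_contra! hlt
  obtain ⟨hcoeff, -⟩ := hchar.coeff_ne_zero_and_not_dvd hprim (hi.trans hk)
  obtain ⟨j, hj⟩ := Ebar_dvd_apply (B := B) (Nat.succ_le_of_lt hi)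
  rw [hj] at hcoeff hlt
  refine pow_ne_pow_of_mem_rootLayer_sdiff (hchar.1 ▸ hN) hi hη₀ hη ?_
  rw [hj, Nat.mul_div_cancel_left _ (Nat.pos_of_ne_zero hE)]
  exact pow_eq_pow_of_lt_order_sub_expand hE hcoeff hlt (hlt.trans_le hmax)

lemma exists_order_sub_expand_eq (hchar : IsCharSeq N y G B)
    (hprim : ∀ d : ℕ, d ∣ N → (∀ j, coeff j y ≠ 0 → d ∣ j) → d = 1) (hN : N ≠ 0) (hk : k < G)
    (hE : Ebar B k ≠ 0)
    (hsum : ∑ η ∈ Polynomial.nthRootsFinset (N / Ebar B k) (1 : ℂ),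
      (y - expand _ hE (rescale η w)).order = Bbar B (k + 1)) :
    ∃ η₀ ∈ Polynomial.nthRootsFinset (N / Ebar B k) (1 : ℂ),
      (y - expand _ hE (rescale η₀ w)).order = B (k + 1) := by
  classical
  obtain rfl : B 0 = N := hchar.1
  obtain ⟨hcoeff, hndvd⟩ := hchar.coeff_ne_zero_and_not_dvd hprim hk
  have hle : ∀ η : ℂ, (y - expand _ hE (rescale η w)).order ≤ B (k + 1) :=
    fun η => order_sub_expand_le hE hcoeff hndvd _
  set ord : ℂ → ℕ := fun η => (y - expand _ hE (rescale η w)).order.toNat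
  have hord : ∀ η, (ord η : ℕ∞) = (y - expand _ hE (rescale η w)).order :=
    fun η => ENat.natCast_toNat (ne_top_of_le_ne_top (ENat.natCast_ne_top _) (hle η))
  have hsum' :
      ∑ η ∈ Polynomial.nthRootsFinset (B 0 / Ebar B k) (1 : ℂ), ord η = Bbar B (k + 1) := by
    have h : ((∑ η ∈ Polynomial.nthRootsFinset (B 0 / Ebar B k) (1 : ℂ), ord η : ℕ) : ℕ∞)
        = Bbar B (k + 1) := by
      push_cast
      simp_rw [hord]
      exact hsum
    exact_mod_cast h
  have hm : 0 < B 0 / Ebar B k :=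
    Nat.pos_of_ne_zero (by simpa [Ebar_zero] using Ebar_div_Ebar_ne_zero hN (Nat.zero_le k))
  obtain ⟨η₀, hη₀, hmax⟩ := exists_max_image _ ord
    ⟨1, (Polynomial.mem_nthRootsFinset hm 1).mpr (one_pow _)⟩
  have hη₀1 : η₀ ^ (B 0 / Ebar B k) = 1 := (Polynomial.mem_nthRootsFinset hm 1).mp hη₀
  have hlayers := sum_nthRootsFinset_add_le hN hE hη₀1 ord fun i hi η hη => by
    have hημ : η ∈ Polynomial.nthRootsFinset (B 0 / Ebar B k) (1 : ℂ) := rootLayer_zero hη₀1 ▸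
      rootLayer_subset_of_le hN (Nat.zero_le i) hi.le η₀ (mem_sdiff.mp hη).1
    have h := order_sub_expand_le_of_mem_rootLayer_sdiff hchar hprim hN hk hE hi
      (Polynomial.ne_zero_of_mem_nthRootsFinset one_ne_zero hη₀) hη
      (by rw [← hord, ← hord]; exact_mod_cast hmax η hημ)
    rw [← hord] at h
    exact_mod_cast h
  refine ⟨η₀, hη₀, le_antisymm (hle η₀) ?_⟩
  rw [← hord]
  exact_mod_cast (by omega : B (k + 1) ≤ ord η₀)

end Squeeze

theorem stmt_15_general (f : Polynomial (PowerSeries ℂ)) (N G : ℕ) (B : ℕ → ℕ) (y : PowerSeries ℂ)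
    (hN : 1 ≤ N) (hparam : IsNPParam f N y) (hchar : IsCharSeq N y G B)
    (k : ℕ) (hk : k < G) (q : Polynomial (PowerSeries ℂ))
    (hq : IsSemiroot N y G B k q) (w : PowerSeries ℂ)
    (hw : IsNPParam q (N / Ebar B k) w) :
    (∃ ω ω' : ℂ, ω ^ N = 1 ∧ ω' ^ (N / Ebar B k) = 1 ∧
      (substPow (N / Ebar B k) (PowerSeries.rescale ω y) -
        substPow N (PowerSeries.rescale ω' w)).order =
          (((N / Ebar B k) * B (k + 1) : ℕ) : ℕ∞)) ∧
    ∀ ω ω' : ℂ, ω ^ N = 1 → ω' ^ (N / Ebar B k) = 1 →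
      (substPow (N / Ebar B k) (PowerSeries.rescale ω y) -
        substPow N (PowerSeries.rescale ω' w)).order ≤
          (((N / Ebar B k) * B (k + 1) : ℕ) : ℕ∞) := by
  obtain ⟨-, -, hprim⟩ := hparam
  obtain ⟨hmonic, hdeg, hord⟩ := hq
  have hN0 : N ≠ 0 := Nat.one_le_iff_ne_zero.mp hN
  have hEN : Ebar B k ∣ N := hchar.Ebar_dvd k
  have hE : Ebar B k ≠ 0 := ne_zero_of_dvd_ne_zero hN0 hEN
  have hm : N / Ebar B k ≠ 0 := (Nat.div_pos (Nat.le_of_dvd (Nat.pos_of_ne_zero hN0) hEN)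
    (Nat.pos_of_ne_zero hE)).ne'
  have hsplit : ∀ σ τ : ℂ⟦X⟧, substPow (N / Ebar B k) σ - substPow N τ
      = expand _ hm (σ - expand _ hE τ) := fun σ τ => by
    simpa only [Nat.div_mul_cancel hEN] using substPow_sub_substPow_mul hm hE σ τ
  have hsum : ∑ η ∈ Polynomial.nthRootsFinset (N / Ebar B k) (1 : ℂ),
      (y - expand _ hE (rescale η w)).order = Bbar B (k + 1) := by
    rw [← order_prod, ← evalCurve_mul_eq_prod hmonic hm hE hdeg hw, Nat.mul_div_cancel' hEN, hord,
      BbarTop, if_pos (Nat.succ_le_of_lt hk)]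
  obtain ⟨η₀, hη₀, hη₀ord⟩ := exists_order_sub_expand_eq hchar hprim hN0 hk hE hsum
  obtain ⟨hcoeff, hndvd⟩ := hchar.coeff_ne_zero_and_not_dvd hprim hk
  refine ⟨⟨1, η₀, one_pow N, (Polynomial.mem_nthRootsFinset (Nat.pos_of_ne_zero hm) 1).mp hη₀, ?_⟩,
    fun ω ω' hω _ => ?_⟩
  · rw [hsplit, rescale_one, RingHom.id_apply, order_expand, hη₀ord, nsmul_eq_mul, Nat.cast_mul]
  · have hω0 : ω ≠ 0 := by
      rintro rfl
      simp [hN0] at hω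
    rw [hsplit, order_expand, nsmul_eq_mul, Nat.cast_mul]
    gcongr
    refine order_sub_expand_le hE ?_ hndvd _
    rw [coeff_rescale]
    exact mul_ne_zero (pow_ne_zero _ hω0) hcoeff

/-- **The coincidence order of a branch with its semiroots.**
For `0 ≤ k ≤ G - 1`, let `q` be a `k`-semiroot of `f`, with primitive Newton–Puiseux
parameterization `X = U ^ (N / E k)`, `Y = w (U)`.  Then the coincidence order of `f` and
`q` equals `B (k+1) / N`:  the maximum over `N`-th roots of unity `ω` and
`(N / E k)`-th roots of unity `ω'` of `ord_S (y (ω S ^ (N / E k)) - w (ω' S ^ N))` is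
exactly `(N / E k) * B (k+1)`; equivalently, `f` and `q` have equal sets of
`k`-truncated Newton–Puiseux series. -/
theorem stmt_15 (f : Polynomial (PowerSeries ℂ)) (N G : ℕ) (B : ℕ → ℕ) (y : PowerSeries ℂ)
    (hN : 1 ≤ N) (hmonic : f.Monic) (hdeg : f.natDegree = N) (hirr : Irreducible f)
    (h00 : PowerSeries.constantCoeff (Polynomial.eval 0 f) = 0)
    (hparam : IsNPParam f N y) (hchar : IsCharSeq N y G B)
    (k : ℕ) (hk : k < G) (q : Polynomial (PowerSeries ℂ))
    (hq : IsSemiroot N y G B k q) (w : PowerSeries ℂ)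
    (hw : IsNPParam q (N / Ebar B k) w) :
    (∃ ω ω' : ℂ, ω ^ N = 1 ∧ ω' ^ (N / Ebar B k) = 1 ∧
      (substPow (N / Ebar B k) (PowerSeries.rescale ω y) -
        substPow N (PowerSeries.rescale ω' w)).order =
          (((N / Ebar B k) * B (k + 1) : ℕ) : ℕ∞)) ∧
    ∀ ω ω' : ℂ, ω ^ N = 1 → ω' ^ (N / Ebar B k) = 1 →
      (substPow (N / Ebar B k) (PowerSeries.rescale ω y) -
        substPow N (PowerSeries.rescale ω' w)).order ≤
          (((N / Ebar B k) * B (k + 1) : ℕ) : ℕ∞) :=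
  stmt_15_general f N G B y hN hparam hchar k hk q hq w hw
end
end

section
/- With notation as in the setup, let q₀, q₁, …, q_G ∈ ℂ[[X]][Y] be monic polynomials with deg_Y q_i = N/E_i for each i. Then every φ ∈ ℂ[[X]][Y] can be written uniquely as a finite sum φ = Σ α_{i₀…i_G}·q₀^{i₀}q₁^{i₁}⋯q_G^{i_G}, where i_G ∈ ℕ, 0 ≤ i_k < N_{k+1} for 0 ≤ k ≤ G−1, and α_{i₀…i_G} ∈ ℂ[[X]]. Moreover: (1) the Y-degrees of the nonzero terms α_{i₀…i_G}q₀^{i₀}⋯q_G^{i_G} are pairwise distinct; (2) if in addition each q_k is a k-semiroot of f, then the T-adic orders of the nonzero series α_{i₀…i_G}(T^N)·q₀(T^N,y(T))^{i₀}⋯q_{G−1}(T^N,y(T))^{i_{G−1}} are pairwise distinct as (i₀,…,i_{G−1}) and the coefficient vary over the indices appearing with nonzero coefficient. -/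
noncomputable section

/-! A product `q₀^{i₀} ⋯ q_G^{i_G}` is monic of degree `Σ i_k N / E_k`, and since
`N / E_{k+1} = (N / E_k)(E_k / E_{k+1})`, mixed-radix numeration shows that these degrees run
through `ℕ` exactly once when `i_k < E_k / E_{k+1}` for `k < G`. Monic polynomials with this
property form a basis of `ℂ[[X]][Y]` over `ℂ[[X]]` (compare leading terms), which gives the
expansion and (1).

For (2), the order of a term is `N ord α + Σ_{k<G} i_k B̄_{k+1}`. Here `E_k` divides `N` and
`B̄₁, …, B̄_k`, while `B̄_{k+1} ≡ B_{k+1} (mod E_k)` gives `gcd (E_k, B̄_{k+1}) = E_{k+1}`; so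
reducing modulo `E_{G-1}`, `E_{G-2}`, … recovers `i_{G-1}, i_{G-2}, …` one after the other. -/

namespace CharSeq

variable (B : ℕ → ℕ)

lemma Ebar_dvd_of_le {j k : ℕ} (h : j ≤ k) : Ebar B k ∣ B j :=
  Finset.gcd_dvd (Finset.mem_range.mpr (Nat.lt_succ_of_le h))

lemma Ebar_dvd_Ebar_of_le {j k : ℕ} (h : j ≤ k) : Ebar B k ∣ Ebar B j :=
  Finset.dvd_gcd fun _ hi =>
    Ebar_dvd_of_le B ((Nat.lt_succ_iff.mp (Finset.mem_range.mp hi)).trans h)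

lemma Ebar_zero : Ebar B 0 = B 0 := by
  simp [Ebar]

lemma Ebar_succ (k : ℕ) : Ebar B (k + 1) = Nat.gcd (B (k + 1)) (Ebar B k) := by
  rw [Ebar, Finset.range_add_one, Finset.gcd_insert]
  rfl

variable {B}

lemma Ebar_pos (hB0 : 0 < B 0) (k : ℕ) : 0 < Ebar B k :=
  Nat.pos_of_dvd_of_pos (Ebar_dvd_of_le B k.zero_le) hB0

lemma Bbar_succ_add (hB0 : 0 < B 0) {i : ℕ} (hi : 1 ≤ i) :
    Bbar B (i + 1) + B i = Ebar B (i - 1) / Ebar B i * Bbar B i + B (i + 1) := by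
  obtain ⟨t, ht⟩ : Ebar B i ∣ Ebar B (i - 1) := Ebar_dvd_Ebar_of_le B (Nat.sub_le i 1)
  have hEi := Ebar_pos hB0 i
  have hEt : Ebar B (i - 1) / Ebar B i = t := by rw [ht, Nat.mul_div_cancel_left t hEi]
  have ht0 : t ≠ 0 := by
    rintro rfl
    exact (Ebar_pos hB0 (i - 1)).ne' (by rw [ht, mul_zero])
  have hsum : Ebar B (i - 1) / Ebar B i *
      ∑ k ∈ Finset.Ico 1 i, (Ebar B (k - 1) - Ebar B k) / Ebar B (i - 1) * B k =
      ∑ k ∈ Finset.Ico 1 i, (Ebar B (k - 1) - Ebar B k) / Ebar B i * B k := by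
    rw [Finset.mul_sum]
    refine Finset.sum_congr rfl fun k hk => ?_
    obtain ⟨hk1, hki⟩ := Finset.mem_Ico.mp hk
    have hdvd : Ebar B (i - 1) ∣ Ebar B (k - 1) - Ebar B k :=
      Nat.dvd_sub (Ebar_dvd_Ebar_of_le B (by omega)) (Ebar_dvd_Ebar_of_le B (by omega))
    rw [← mul_assoc, Nat.div_mul_div_comm ⟨t, ht⟩ hdvd, mul_comm (Ebar B i),
      Nat.mul_div_mul_left _ _ (Ebar_pos hB0 (i - 1))]
  have htop : (Ebar B (i - 1) - Ebar B i) / Ebar B i = t - 1 := by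
    rw [ht, ← Nat.mul_sub_one, Nat.mul_div_cancel_left _ hEi]
  rw [Bbar, if_neg (by omega), Bbar, if_neg (by omega), Nat.add_sub_cancel,
    Finset.sum_Ico_succ_top hi, mul_add, hsum, htop, hEt]
  obtain ⟨s, rfl⟩ : ∃ s, t = s + 1 := ⟨t - 1, by omega⟩
  rw [Nat.add_sub_cancel]
  ring

lemma Ebar_dvd_Bbar_of_le (hB0 : 0 < B 0) {j k : ℕ} (h : j ≤ k) : Ebar B k ∣ Bbar B j := by
  induction j with
  | zero => exact Ebar_dvd_of_le B h
  | succ j ih =>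
    rcases Nat.eq_zero_or_pos j with rfl | hj
    · simpa [Bbar] using Ebar_dvd_of_le B h
    · have hrhs : Ebar B k ∣ Bbar B (j + 1) + B j := by
        rw [Bbar_succ_add hB0 hj]
        exact dvd_add (dvd_mul_of_dvd_right (ih (by omega)) _) (Ebar_dvd_of_le B h)
      exact (Nat.dvd_add_left (Ebar_dvd_of_le B (by omega))).mp hrhs

lemma gcd_Ebar_Bbar_succ (hB0 : 0 < B 0) (m : ℕ) :
    Nat.gcd (Ebar B m) (Bbar B (m + 1)) = Ebar B (m + 1) := by
  rw [Ebar_succ, Nat.gcd_comm (B (m + 1))]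
  rcases Nat.eq_zero_or_pos m with rfl | hm
  · simp [Bbar]
  · obtain ⟨u, hu⟩ := Ebar_dvd_of_le B le_rfl (k := m)
    obtain ⟨s, hs⟩ :=
      dvd_mul_of_dvd_right (Ebar_dvd_Bbar_of_le hB0 le_rfl) (Ebar B (m - 1) / Ebar B m)
    have hrec := Bbar_succ_add hB0 hm
    rw [hu, hs] at hrec
    rw [← Nat.gcd_add_mul_left_right _ (Bbar B (m + 1)) u, hrec, Nat.gcd_mul_left_add_right]

lemma div_Ebar_zero (hB0 : 0 < B 0) : B 0 / Ebar B 0 = 1 := by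
  rw [Ebar_zero, Nat.div_self hB0]

lemma div_Ebar_succ (hB0 : 0 < B 0) (k : ℕ) :
    B 0 / Ebar B (k + 1) = B 0 / Ebar B k * (Ebar B k / Ebar B (k + 1)) := by
  rw [Nat.div_mul_div_comm (Ebar_dvd_of_le B k.zero_le)
      (Ebar_dvd_Ebar_of_le B (Nat.le_add_right k 1)),
    mul_comm (Ebar B k), Nat.mul_div_mul_right _ _ (Ebar_pos hB0 k)]

lemma Ebar_div_Ebar_succ_pos (hB0 : 0 < B 0) (k : ℕ) : 0 < Ebar B k / Ebar B (k + 1) :=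
  Nat.div_pos (Nat.le_of_dvd (Ebar_pos hB0 k) (Ebar_dvd_Ebar_of_le B k.le_succ))
    (Ebar_pos hB0 (k + 1))

lemma Ebar_dvd_add_sum_mul_Bbar (hB0 : 0 < B 0) {G : ℕ} (a : ℕ) (i : Fin G → ℕ) :
    Ebar B G ∣ B 0 * a + ∑ k, i k * Bbar B (k + 1) :=
  dvd_add (dvd_mul_of_dvd_left (Ebar_dvd_of_le B G.zero_le) a)
    (Finset.dvd_sum fun k _ => dvd_mul_of_dvd_right (Ebar_dvd_Bbar_of_le hB0 k.isLt) _)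

/-- Writing `E m = E (m+1) r` and `B̄ (m+1) = E (m+1) w`, the integers `r` and `w` are coprime,
so `r ∣ u - v` while `|u - v| < r`. -/
lemma eq_of_Ebar_dvd_sub_mul_Bbar (hB0 : 0 < B 0) {m u v : ℕ}
    (hu : u < Ebar B m / Ebar B (m + 1)) (hv : v < Ebar B m / Ebar B (m + 1))
    (h : (Ebar B m : ℤ) ∣ ((u : ℤ) - v) * Bbar B (m + 1)) : u = v := by
  have hgcd := gcd_Ebar_Bbar_succ hB0 m
  have hg : 0 < Ebar B (m + 1) := Ebar_pos hB0 (m + 1)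
  have hcop := Nat.coprime_div_gcd_div_gcd (hgcd ▸ hg)
  obtain ⟨r, hr⟩ : Ebar B (m + 1) ∣ Ebar B m := hgcd ▸ Nat.gcd_dvd_left _ _
  obtain ⟨w, hw⟩ : Ebar B (m + 1) ∣ Bbar B (m + 1) := hgcd ▸ Nat.gcd_dvd_right _ _
  rw [hgcd, hr, hw, Nat.mul_div_cancel_left _ hg, Nat.mul_div_cancel_left _ hg] at hcop
  rw [hr, Nat.mul_div_cancel_left _ hg] at hu hv
  rw [hr, hw, Nat.cast_mul, Nat.cast_mul, mul_left_comm] at h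
  have hrw : (r : ℤ) ∣ ((u : ℤ) - v) * w := (mul_dvd_mul_iff_left (by exact_mod_cast hg.ne')).mp h
  have hrd : (r : ℤ) ∣ (u : ℤ) - v :=
    (Nat.isCoprime_iff_coprime.mpr hcop).dvd_of_dvd_mul_right hrw
  have := Int.eq_zero_of_abs_lt_dvd hrd (by rw [abs_lt]; omega)
  omega

theorem eq_of_add_sum_mul_Bbar_eq (hB0 : 0 < B 0) {G a b : ℕ} {i j : Fin G → ℕ}
    (hi : ∀ k, i k < Ebar B k / Ebar B (k + 1)) (hj : ∀ k, j k < Ebar B k / Ebar B (k + 1))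
    (h : B 0 * a + ∑ k, i k * Bbar B (k + 1) = B 0 * b + ∑ k, j k * Bbar B (k + 1)) :
    i = j := by
  induction G with
  | zero => exact funext fun k => k.elim0
  | succ G ih =>
    simp only [Fin.sum_univ_castSucc, Fin.val_castSucc, Fin.val_last, ← add_assoc] at h
    have hlast : i (Fin.last G) = j (Fin.last G) := by
      refine eq_of_Ebar_dvd_sub_mul_Bbar hB0 (hi _) (hj _) ?_
      obtain ⟨x, hx⟩ := Ebar_dvd_add_sum_mul_Bbar hB0 a fun k => i k.castSucc
      obtain ⟨y, hy⟩ := Ebar_dvd_add_sum_mul_Bbar hB0 b fun k => j k.castSucc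
      rw [hx, hy] at h
      refine ⟨y - x, ?_⟩
      rw [Fin.val_last]
      zify at h
      linear_combination h
    rw [hlast, add_left_inj] at h
    have hinit := ih (fun k => hi k.castSucc) (fun k => hj k.castSucc) h
    funext k
    exact Fin.lastCases hlast (fun k => congrFun hinit k) k

end CharSeq

section MixedRadix

variable {d r : ℕ → ℕ}

lemma sum_mul_lt_of_digit_lt (hd0 : d 0 = 1) (hdr : ∀ k, d (k + 1) = d k * r k) {L : ℕ}
    {i : Fin L → ℕ} (hi : ∀ k, i k < r k) : ∑ k, i k * d k < d L := by
  induction L with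
  | zero => simp [hd0]
  | succ L ih =>
    rw [Fin.sum_univ_castSucc, hdr]
    have hlow := ih fun k => hi k.castSucc
    have htop : i (Fin.last L) + 1 ≤ r L := hi (Fin.last L)
    calc _ < d L + i (Fin.last L) * d L := by simpa using hlow
      _ = (i (Fin.last L) + 1) * d L := by ring
      _ ≤ d L * r L := by rw [mul_comm]; exact Nat.mul_le_mul_left _ htop

lemma mod_eq_sum_digit_mul (hd0 : d 0 = 1) (hdr : ∀ k, d (k + 1) = d k * r k) (n : ℕ) :
    ∀ L, n % d L = ∑ k : Fin L, n / d k % r k * d k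
  | 0 => by simp [hd0, Nat.mod_one]
  | L + 1 => by
    rw [hdr, Nat.mod_mul, mod_eq_sum_digit_mul hd0 hdr n L, Fin.sum_univ_castSucc, mul_comm (d L)]
    rfl

lemma eq_of_sum_digit_mul_eq (hd0 : d 0 = 1) (hdr : ∀ k, d (k + 1) = d k * r k) {L : ℕ}
    {i j : Fin (L + 1) → ℕ} (hi : ∀ k : Fin (L + 1), (k : ℕ) < L → i k < r k)
    (hj : ∀ k : Fin (L + 1), (k : ℕ) < L → j k < r k)
    (h : ∑ k, i k * d k = ∑ k, j k * d k) : i = j := by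
  induction L with
  | zero =>
    funext k
    simpa [Fin.fin_one_eq_zero k, hd0] using h
  | succ L ih =>
    rw [Fin.sum_univ_castSucc (fun k => i k * d k), Fin.sum_univ_castSucc (fun k => j k * d k),
      Fin.val_last] at h
    have hilow := sum_mul_lt_of_digit_lt hd0 hdr fun k => hi k.castSucc k.isLt
    have hjlow := sum_mul_lt_of_digit_lt hd0 hdr fun k => hj k.castSucc k.isLt
    have hd : 0 < d (L + 1) := Nat.zero_lt_of_lt hilow
    have htop : i (Fin.last _) = j (Fin.last _) := by
      have := congrArg (· / d (L + 1)) h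
      simpa [Nat.add_mul_div_right _ _ hd, Nat.div_eq_of_lt hilow, Nat.div_eq_of_lt hjlow]
        using this
    rw [htop, add_left_inj] at h
    have hinit := ih (fun k hk => hi k.castSucc (Nat.lt_succ_of_lt hk))
      (fun k hk => hj k.castSucc (Nat.lt_succ_of_lt hk)) h
    funext k
    exact Fin.lastCases htop (fun k => congrFun hinit k) k

theorem bijOn_sum_digit_mul (hd0 : d 0 = 1) (hdr : ∀ k, d (k + 1) = d k * r k)
    (hr : ∀ k, 0 < r k) (L : ℕ) :
    Set.BijOn (fun i : Fin (L + 1) → ℕ => ∑ k, i k * d k)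
      {i | ∀ k : Fin (L + 1), (k : ℕ) < L → i k < r k} Set.univ := by
  refine ⟨fun _ _ => trivial, fun i hi j hj h => eq_of_sum_digit_mul_eq hd0 hdr hi hj h,
    fun n _ => ?_⟩
  refine ⟨fun k => if (k : ℕ) < L then n / d k % r k else n / d L, fun k hk => ?_, ?_⟩
  · simp only [if_pos hk]
    exact Nat.mod_lt _ (hr k)
  · simp only [Fin.sum_univ_castSucc, Fin.val_castSucc, Fin.is_lt, if_true, Fin.val_last,
      lt_irrefl, if_false]
    rw [← mod_eq_sum_digit_mul hd0 hdr, Nat.mod_add_div']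

end MixedRadix

namespace Polynomial

variable {R ι : Type*} [CommRing R] {p : ι → R[X]} {S : Set ι}

lemma exists_finsupp_sum_C_mul_eq (hp : ∀ i ∈ S, (p i).Monic)
    (hS : Set.SurjOn (fun i => (p i).natDegree) S Set.univ) (φ : R[X]) :
    ∃ c : ι →₀ R, (∀ i ∈ c.support, i ∈ S) ∧ φ = c.sum fun i a => C a * p i := by
  classical
  induction φ using degree_lt_wf.induction with
  | _ φ ih =>
    by_cases hφ : φ = 0
    · exact ⟨0, by simp, by simp [hφ]⟩
    obtain ⟨i, hiS, hi : (p i).natDegree = φ.natDegree⟩ := hS (Set.mem_univ φ.natDegree)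
    have hlc : φ.leadingCoeff ≠ 0 := leadingCoeff_ne_zero.mpr hφ
    have : Nontrivial R := nontrivial_of_ne _ _ hlc
    have hdeg : (C φ.leadingCoeff * p i).degree = φ.degree := by
      rw [(hp i hiS).degree_mul, degree_C hlc, zero_add, degree_eq_natDegree (hp i hiS).ne_zero,
        degree_eq_natDegree hφ, hi]
    have hlead : (C φ.leadingCoeff * p i).leadingCoeff = φ.leadingCoeff := by
      rw [leadingCoeff_mul_monic (hp i hiS), leadingCoeff_C]
    obtain ⟨c, hcS, hc⟩ := ih _ (degree_sub_lt_left hdeg.symm hφ hlead.symm)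
    refine ⟨Finsupp.single i φ.leadingCoeff + c, fun j hj => ?_, ?_⟩
    · rcases Finset.mem_union.mp (Finsupp.support_add hj) with hj | hj
      · rwa [Finset.mem_singleton.mp (Finsupp.support_single_subset hj)]
      · exact hcS j hj
    · rw [Finsupp.sum_add_index' (by simp) (by simp [add_mul]), Finsupp.sum_single_index (by simp),
        ← hc, add_sub_cancel]

lemma eq_zero_of_finsupp_sum_C_mul_eq_zero (hp : ∀ i ∈ S, (p i).Monic)
    (hS : Set.InjOn (fun i => (p i).natDegree) S) {c : ι →₀ R} (hcS : ∀ i ∈ c.support, i ∈ S)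
    (h : (c.sum fun i a => C a * p i) = 0) : c = 0 := by
  by_contra hc
  obtain ⟨i₀, hi₀, hmax⟩ :=
    c.support.exists_max_image (fun i => (p i).natDegree) (Finsupp.support_nonempty_iff.mpr hc)
  have hcoeff := congrArg (coeff · (p i₀).natDegree) h
  simp only [Finsupp.sum, finsetSum_coeff, coeff_C_mul, coeff_zero] at hcoeff
  rw [Finset.sum_eq_single i₀ (fun i hi hne => ?_) (fun h => absurd hi₀ h),
    (hp i₀ (hcS i₀ hi₀)).coeff_natDegree, mul_one] at hcoeff
  · exact Finsupp.mem_support_iff.mp hi₀ hcoeff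
  · have hlt : (p i).natDegree < (p i₀).natDegree :=
      (hmax i hi).lt_of_ne fun heq => hne (hS (hcS i hi) (hcS i₀ hi₀) heq)
    rw [coeff_eq_zero_of_natDegree_lt hlt, mul_zero]

theorem existsUnique_finsupp_sum_C_mul_eq (hp : ∀ i ∈ S, (p i).Monic)
    (hS : Set.BijOn (fun i => (p i).natDegree) S Set.univ) (φ : R[X]) :
    ∃! c : ι →₀ R, (∀ i ∈ c.support, i ∈ S) ∧ φ = c.sum fun i a => C a * p i := by
  classical
  obtain ⟨c, hc⟩ := exists_finsupp_sum_C_mul_eq hp hS.surjOn φ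
  refine ⟨c, hc, fun c' hc' => sub_eq_zero.mp (eq_zero_of_finsupp_sum_C_mul_eq_zero hp hS.injOn
    (fun i hi => ?_) ?_)⟩
  · rcases Finset.mem_union.mp (Finsupp.support_sub hi) with hi | hi
    exacts [hc'.1 i hi, hc.1 i hi]
  · rw [Finsupp.sum_sub_index (by simp [sub_mul]), ← hc.2, ← hc'.2, sub_self]

lemma injOn_degree_C_mul (hp : ∀ i ∈ S, (p i).Monic)
    (hS : Set.InjOn (fun i => (p i).natDegree) S) {c : ι →₀ R} (hcS : ∀ i ∈ c.support, i ∈ S) :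
    Set.InjOn (fun i => (C (c i) * p i).degree) c.support := by
  have hdeg : ∀ i ∈ c.support, (C (c i) * p i).degree = (p i).natDegree := fun i hi => by
    have hci := Finsupp.mem_support_iff.mp hi
    have : Nontrivial R := nontrivial_of_ne _ _ hci
    rw [(hp i (hcS i hi)).degree_mul, degree_C hci, zero_add,
      degree_eq_natDegree (hp i (hcS i hi)).ne_zero]
  intro i hi j hj h
  simp only [hdeg i hi, hdeg j hj, Nat.cast_inj] at h
  exact hS (hcS i hi) (hcS j hj) h

end Polynomial

lemma Fin.prod_filter_val_lt_last {M : Type*} [CommMonoid M] {n : ℕ} (f : Fin (n + 1) → M) :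
    ∏ k ∈ Finset.univ.filter (fun k : Fin (n + 1) => (k : ℕ) < n), f k =
      ∏ k : Fin n, f k.castSucc := by
  simp [Finset.prod_filter, Fin.prod_univ_castSucc]

section Orders

open PowerSeries

lemma order_substPow {n : ℕ} (hn : 0 < n) (σ : PowerSeries ℂ) :
    (substPow n σ).order = n * σ.order := by
  by_cases hσ : σ = 0
  · have : substPow n σ = 0 := by ext j; simp [substPow, hσ]
    rw [this, hσ, order_zero, ENat.mul_top (by exact_mod_cast hn.ne')]
  obtain ⟨m, hm⟩ := ENat.ne_top_iff_exists.mp (mt order_eq_top.mp hσ)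
  obtain ⟨hcoeff, hlt⟩ := order_eq_nat.mp hm.symm
  rw [← hm, ← Nat.cast_mul, order_eq_nat]
  refine ⟨?_, fun j hj => ?_⟩
  · rwa [substPow, coeff_mk, if_pos (dvd_mul_right n m), Nat.mul_div_cancel_left m hn]
  · rw [substPow, coeff_mk]
    split_ifs
    · exact hlt _ ((Nat.div_lt_iff_lt_mul hn).mpr (by rwa [mul_comm]))
    · rfl

lemma order_substPow_mul_prod_semiroot_pow {N G : ℕ} {y : PowerSeries ℂ} {B : ℕ → ℕ}
    (hN : 0 < N) {q : Fin (G + 1) → Polynomial (PowerSeries ℂ)}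
    (hq : ∀ k : Fin (G + 1), IsSemiroot N y G B k (q k)) (a : PowerSeries ℂ)
    (i : Fin (G + 1) → ℕ) :
    (substPow N a * ∏ k ∈ Finset.univ.filter (fun k : Fin (G + 1) => (k : ℕ) < G),
        evalCurve N y (q k) ^ i k).order =
      N * a.order + ((∑ k : Fin G, i k.castSucc * Bbar B (k + 1) : ℕ) : ℕ∞) := by
  rw [order_mul, order_substPow hN, Fin.prod_filter_val_lt_last, order_prod, Nat.cast_sum]
  congr 1
  refine Finset.sum_congr rfl fun k _ => ?_
  rw [order_pow, (hq k.castSucc).2.2, BbarTop,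
    if_pos (show (k.castSucc : ℕ) + 1 ≤ G from k.isLt), nsmul_eq_mul]
  norm_cast

end Orders

open Polynomial in
theorem stmt_16_general (N G : ℕ) (B : ℕ → ℕ) (y : PowerSeries ℂ)
    (hN : 1 ≤ N) (hchar : IsCharSeq N y G B)
    (q : Fin (G + 1) → Polynomial (PowerSeries ℂ))
    (hq : ∀ k : Fin (G + 1), (q k).Monic ∧ (q k).natDegree = N / Ebar B (k : ℕ))
    (φ : Polynomial (PowerSeries ℂ)) :
    (∃! c : (Fin (G + 1) → ℕ) →₀ PowerSeries ℂ,
      (∀ i ∈ c.support, ∀ k : Fin (G + 1), (k : ℕ) < G →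
        i k < Ebar B (k : ℕ) / Ebar B ((k : ℕ) + 1)) ∧
      φ = c.sum fun i a => Polynomial.C a * ∏ k, q k ^ i k) ∧
    ∀ c : (Fin (G + 1) → ℕ) →₀ PowerSeries ℂ,
      (∀ i ∈ c.support, ∀ k : Fin (G + 1), (k : ℕ) < G →
        i k < Ebar B (k : ℕ) / Ebar B ((k : ℕ) + 1)) →
      φ = c.sum (fun i a => Polynomial.C a * ∏ k, q k ^ i k) →
      (∀ i ∈ c.support, ∀ j ∈ c.support, i ≠ j →
        (Polynomial.C (c i) * ∏ k, q k ^ i k).degree ≠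
          (Polynomial.C (c j) * ∏ k, q k ^ j k).degree) ∧
      ((∀ k : Fin (G + 1), IsSemiroot N y G B (k : ℕ) (q k)) →
        ∀ i ∈ c.support, ∀ j ∈ c.support,
          (∃ k : Fin (G + 1), (k : ℕ) < G ∧ i k ≠ j k) →
          (substPow N (c i) * ∏ k ∈ Finset.univ.filter (fun k : Fin (G + 1) => (k : ℕ) < G),
              evalCurve N y (q k) ^ i k).order ≠
            (substPow N (c j) * ∏ k ∈ Finset.univ.filter (fun k : Fin (G + 1) => (k : ℕ) < G),
              evalCurve N y (q k) ^ j k).order) := by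
  obtain ⟨hB0, -⟩ := hchar
  subst hB0
  set S : Set (Fin (G + 1) → ℕ) :=
    {i | ∀ k : Fin (G + 1), (k : ℕ) < G → i k < Ebar B k / Ebar B (k + 1)}
  have hmonic : ∀ i ∈ S, (∏ k, q k ^ i k).Monic := fun i _ =>
    monic_prod_of_monic _ _ fun k _ => (hq k).1.pow _
  have hbij : Set.BijOn (fun i => (∏ k, q k ^ i k).natDegree) S Set.univ := by
    have hdeg : (fun i => (∏ k, q k ^ i k).natDegree) =
        fun i : Fin (G + 1) → ℕ => ∑ k, i k * (B 0 / Ebar B k) := by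
      funext i
      rw [natDegree_prod_of_monic _ _ fun k _ => (hq k).1.pow _]
      simp only [natDegree_pow, (hq _).2]
    rw [hdeg]
    exact bijOn_sum_digit_mul (d := fun k => B 0 / Ebar B k) (CharSeq.div_Ebar_zero hN)
      (CharSeq.div_Ebar_succ hN) (CharSeq.Ebar_div_Ebar_succ_pos hN) G
  refine ⟨existsUnique_finsupp_sum_C_mul_eq hmonic hbij φ, fun c hc _ =>
    ⟨fun i hi j hj hij h => hij (injOn_degree_C_mul hmonic hbij.injOn hc hi hj h), ?_⟩⟩
  rintro hsemi i hi j hj ⟨k, hkG, hk⟩ horder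
  obtain ⟨m₁, hm₁⟩ := ENat.ne_top_iff_exists.mp
    (mt PowerSeries.order_eq_top.mp (Finsupp.mem_support_iff.mp hi))
  obtain ⟨m₂, hm₂⟩ := ENat.ne_top_iff_exists.mp
    (mt PowerSeries.order_eq_top.mp (Finsupp.mem_support_iff.mp hj))
  rw [order_substPow_mul_prod_semiroot_pow hN hsemi, order_substPow_mul_prod_semiroot_pow hN hsemi,
    ← hm₁, ← hm₂] at horder
  norm_cast at horder
  have hdigits := CharSeq.eq_of_add_sum_mul_Bbar_eq hN (fun k => hc i hi k.castSucc k.isLt)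
    (fun k => hc j hj k.castSucc k.isLt) horder
  exact hk (congrFun hdigits ⟨k, hkG⟩)

/-- **Expansion of an arbitrary polynomial in terms of semiroots.**
Let `q 0, …, q G ∈ ℂ[[X]][Y]` be monic with `deg_Y (q i) = N / E i`.  Then every
`φ ∈ ℂ[[X]][Y]` is uniquely a finite sum `φ = Σ α_{i₀…i_G} q₀^{i₀} ⋯ q_G^{i_G}` with
`α_{i₀…i_G} ∈ ℂ[[X]]` and `i_k < N (k+1) = E k / E (k+1)` for `k < G`.  Moreover:
(1) the `Y`-degrees of the nonzero terms are pairwise distinct;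
(2) if each `q k` is a `k`-semiroot of `f`, the `T`-adic orders of the nonzero series
`α_{i₀…i_G} (T^N) · q₀ (T^N, y(T))^{i₀} ⋯ q_{G-1} (T^N, y(T))^{i_{G-1}}` are pairwise
distinct as `(i₀, …, i_{G-1})` varies over the indices appearing with nonzero
coefficient. -/
theorem stmt_16 (f : Polynomial (PowerSeries ℂ)) (N G : ℕ) (B : ℕ → ℕ) (y : PowerSeries ℂ)
    (hN : 1 ≤ N) (hmonic : f.Monic) (hdeg : f.natDegree = N) (hirr : Irreducible f)
    (h00 : PowerSeries.constantCoeff (Polynomial.eval 0 f) = 0)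
    (hparam : IsNPParam f N y) (hchar : IsCharSeq N y G B)
    (q : Fin (G + 1) → Polynomial (PowerSeries ℂ))
    (hq : ∀ k : Fin (G + 1), (q k).Monic ∧ (q k).natDegree = N / Ebar B (k : ℕ))
    (φ : Polynomial (PowerSeries ℂ)) :
    (∃! c : (Fin (G + 1) → ℕ) →₀ PowerSeries ℂ,
      (∀ i ∈ c.support, ∀ k : Fin (G + 1), (k : ℕ) < G →
        i k < Ebar B (k : ℕ) / Ebar B ((k : ℕ) + 1)) ∧
      φ = c.sum fun i a => Polynomial.C a * ∏ k, q k ^ i k) ∧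
    ∀ c : (Fin (G + 1) → ℕ) →₀ PowerSeries ℂ,
      (∀ i ∈ c.support, ∀ k : Fin (G + 1), (k : ℕ) < G →
        i k < Ebar B (k : ℕ) / Ebar B ((k : ℕ) + 1)) →
      φ = c.sum (fun i a => Polynomial.C a * ∏ k, q k ^ i k) →
      (∀ i ∈ c.support, ∀ j ∈ c.support, i ≠ j →
        (Polynomial.C (c i) * ∏ k, q k ^ i k).degree ≠
          (Polynomial.C (c j) * ∏ k, q k ^ j k).degree) ∧
      ((∀ k : Fin (G + 1), IsSemiroot N y G B (k : ℕ) (q k)) →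
        ∀ i ∈ c.support, ∀ j ∈ c.support,
          (∃ k : Fin (G + 1), (k : ℕ) < G ∧ i k ≠ j k) →
          (substPow N (c i) * ∏ k ∈ Finset.univ.filter (fun k : Fin (G + 1) => (k : ℕ) < G),
              evalCurve N y (q k) ^ i k).order ≠
            (substPow N (c j) * ∏ k ∈ Finset.univ.filter (fun k : Fin (G + 1) => (k : ℕ) < G),
              evalCurve N y (q k) ^ j k).order) :=
  stmt_16_general N G B y hN hchar q hq φ
end
end
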